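/- For α ∈ ℂ with Re α ∉ ℤ set n_α = ⌊Re α⌋ and h_α(y) = Γ(n_α + 1 − y)·(1/Γ(−y)), a function holomorphic in a neighbourhood of α, and for j ∈ ℕ and x > 0 define Λ_{α,j}(x) = (d/dy)^j [ h_α(y) · exp(−(y+1)·log x) ] evaluated at y = α. Then for all x > 0: (i) (d/dx) Λ_{α,j}(x) = Λ_{α+1,j}(x), and (ii) −x·Λ_{α,j}(x) = α·Λ_{α−1,j}(x) + j·Λ_{α−1,j−1}(x), where the last term is interpreted as 0 when j = 0. (These are the identities L(z·m) = (d/dx)L(m) and L(dm/dz) = −x·L(m) of the paper's Proposition on the rational inverse Laplace transform, on the monomials m = z^α (log z)^j with non-integral Re α.) -/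

import Mathlib

open Complex

/-- `Λ_{α,j}(x) = (d/dy)^j [Γ(⌊Re α⌋ + 1 - y)·(1/Γ(-y))·exp(-(y+1) log x)]` at `y = α`. -/
noncomputable def Lam (α : ℂ) (j : ℕ) (x : ℝ) : ℂ :=
  iteratedDeriv j (fun y : ℂ =>
    Complex.Gamma ((⌊α.re⌋ : ℂ) + 1 - y) * (Complex.Gamma (-y))⁻¹ *
      Complex.exp (-(y + 1) * (Real.log x : ℂ))) α

/-!
Write `Λ_{α,j}(x) = D^j[h_α(y) e^{-(y+1) log x}]` at `y = α`, with `D = d/dy`. Differentiation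
in `x` commutes with `D^j` (everything is holomorphic in `y`) and multiplies the kernel by
`-(y+1)/x`, while multiplication by `x` shifts the kernel by one in `y`. The recurrence
`1/Γ(-y) = -y/Γ(1-y)` turns `-(y+1) h_α(y)` into `h_{α+1}(y+1)` and `y h_{α-1}(y-1)` into
`-h_α(y)`; the term `j Λ_{α-1,j-1}` is the Leibniz correction in
`D^j[y F] = y D^j F + j D^{j-1} F`.
-/

open Filter Topology

lemma iteratedDeriv_id_mul {𝕜 : Type*} [NontriviallyNormedField 𝕜] {f : 𝕜 → 𝕜} {z : 𝕜}
    {j : ℕ} (hf : ContDiffAt 𝕜 j f z) :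
    iteratedDeriv j (fun y => y * f y) z =
      z * iteratedDeriv j f z + j * iteratedDeriv (j - 1) f z := by
  rw [iteratedDeriv_fun_mul (f := fun y => y) contDiffAt_id hf]
  cases j with
  | zero => simp
  | succ k =>
    simp [Finset.sum_range_succ', iteratedDeriv_fun_id]
    ring

section

variable {f g : ℂ → ℂ} {z : ℂ}

lemma iteratedDeriv_succ_mul_cexp (hf : AnalyticAt ℂ f z) (hg : AnalyticAt ℂ g z)
    (j : ℕ) (w : ℂ) :
    iteratedDeriv (j + 1) (fun y => f y * exp (g y * w)) z =
      iteratedDeriv j (fun y => deriv f y * exp (g y * w)) z +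
        w * iteratedDeriv j (fun y => deriv g y * f y * exp (g y * w)) z := by
  have hderiv : deriv (fun y => f y * exp (g y * w)) =ᶠ[𝓝 z]
      fun y => deriv f y * exp (g y * w) + w * (deriv g y * f y * exp (g y * w)) := by
    filter_upwards [hf.eventually_analyticAt, hg.eventually_analyticAt] with y hfy hgy
    rw [(hfy.differentiableAt.hasDerivAt.fun_mul
      (hgy.differentiableAt.hasDerivAt.mul_const w).cexp).deriv]
    ring
  have hE : AnalyticAt ℂ (fun y => exp (g y * w)) z := (hg.mul analyticAt_const).cexp'
  rw [iteratedDeriv_succ', hderiv.iteratedDeriv_eq, iteratedDeriv_fun_add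
    (f := fun y => deriv f y * exp (g y * w))
    (g := fun y => w * (deriv g y * f y * exp (g y * w)))
    (hf.deriv.mul hE).contDiffAt (analyticAt_const.mul ((hg.deriv.mul hf).mul hE)).contDiffAt,
    iteratedDeriv_const_mul_field]

theorem hasDerivAt_iteratedDeriv_mul_cexp (hf : AnalyticAt ℂ f z) (hg : AnalyticAt ℂ g z)
    (j : ℕ) (w : ℂ) :
    HasDerivAt (fun w => iteratedDeriv j (fun y => f y * exp (g y * w)) z)
      (iteratedDeriv j (fun y => g y * f y * exp (g y * w)) z) w := by
  induction j generalizing f with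
  | zero =>
    simpa [mul_comm, mul_left_comm] using
      (((hasDerivAt_id w).const_mul (g z)).cexp).const_mul (f z)
  | succ j ih =>
    have hgf : AnalyticAt ℂ (fun y => g y * f y) z := hg.mul hf
    have hE : AnalyticAt ℂ (fun y => exp (g y * w)) z := (hg.mul analyticAt_const).cexp'
    have hderiv : (fun y => deriv (fun y => g y * f y) y * exp (g y * w)) =ᶠ[𝓝 z]
        fun y => deriv g y * f y * exp (g y * w) + g y * deriv f y * exp (g y * w) := by
      filter_upwards [hf.eventually_analyticAt, hg.eventually_analyticAt] with y hfy hgy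
      rw [(hgy.differentiableAt.hasDerivAt.fun_mul hfy.differentiableAt.hasDerivAt).deriv]
      ring
    have hg'gf : (fun y => deriv g y * (g y * f y) * exp (g y * w))
        = fun y => g y * (deriv g y * f y) * exp (g y * w) := by
      funext y; ring
    simp_rw [iteratedDeriv_succ_mul_cexp hf hg]
    rw [iteratedDeriv_succ_mul_cexp hgf hg, hderiv.iteratedDeriv_eq, iteratedDeriv_fun_add
      (f := fun y => deriv g y * f y * exp (g y * w))
      (g := fun y => g y * deriv f y * exp (g y * w))
      ((hg.deriv.mul hf).mul hE).contDiffAt ((hg.mul hf.deriv).mul hE).contDiffAt, hg'gf]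
    refine ((ih hf.deriv).fun_add ((hasDerivAt_id' w).fun_mul
      (ih (f := fun y => deriv g y * f y) (hg.deriv.mul hf)))).congr_deriv ?_
    ring

end

lemma iteratedDeriv_mul_cexp_add_const (h : ℂ → ℂ) (j : ℕ) (z c w : ℂ) :
    iteratedDeriv j (fun y => h y * exp (-(y + 1) * w)) (z + c) =
      exp (-c * w) * iteratedDeriv j (fun y => h (y + c) * exp (-(y + 1) * w)) z := by
  rw [← congrFun (iteratedDeriv_comp_add_const j (fun y => h y * exp (-(y + 1) * w)) c) z,
    ← iteratedDeriv_const_mul_field]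
  congr 1
  funext y
  rw [mul_left_comm, ← exp_add]
  ring_nf

namespace Complex

lemma exp_ofReal_log {x : ℝ} (hx : 0 < x) : exp (Real.log x) = x := by
  rw [← ofReal_exp, Real.exp_log hx]

lemma analyticAt_Gamma_of_re_pos {s : ℂ} (hs : 0 < s.re) : AnalyticAt ℂ Gamma s := by
  refine DifferentiableOn.analyticAt (fun t ht => ?_)
    ((isOpen_lt continuous_const continuous_re).mem_nhds hs)
  refine (differentiableAt_Gamma t fun m hm => ?_).differentiableWithinAt
  have : t.re = -m := by simp [hm]
  exact (show 0 < t.re from ht).not_ge (by simp [this])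

lemma inv_Gamma_neg (y : ℂ) : (Gamma (-y))⁻¹ = -y * (Gamma (1 - y))⁻¹ := by
  rw [one_div_Gamma_eq_self_mul_one_div_Gamma_add_one, neg_add_eq_sub]

end Complex

noncomputable def gammaRatio (n : ℤ) (y : ℂ) : ℂ :=
  Gamma (n + 1 - y) * (Gamma (-y))⁻¹

lemma gammaRatio_add_one (n : ℤ) (y : ℂ) :
    gammaRatio (n + 1) (y + 1) = -(y + 1) * gammaRatio n y := by
  simp only [gammaRatio, inv_Gamma_neg (y + 1)]
  push_cast
  ring_nf

lemma mul_gammaRatio_sub_one (n : ℤ) (y : ℂ) :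
    y * gammaRatio (n - 1) (y - 1) = -gammaRatio n y := by
  simp only [gammaRatio, inv_Gamma_neg y]
  push_cast
  ring_nf

lemma analyticAt_gammaRatio {n : ℤ} {y : ℂ} (hy : y.re < n + 1) :
    AnalyticAt ℂ (gammaRatio n) y := by
  have hΓ : AnalyticAt ℂ (fun y : ℂ => Gamma (n + 1 - y)) y :=
    (analyticAt_Gamma_of_re_pos (by simpa using hy)).comp (by fun_prop)
  exact hΓ.mul ((Complex.differentiable_one_div_Gamma.comp differentiable_neg).analyticAt y)

lemma Lam_eq_iteratedDeriv (α : ℂ) (j : ℕ) (x : ℝ) :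
    Lam α j x =
      iteratedDeriv j (fun y => gammaRatio ⌊α.re⌋ y * exp (-(y + 1) * Real.log x)) α :=
  rfl

section Lam

variable (α : ℂ) (j : ℕ) {x : ℝ}

lemma Lam_add_one (hx : 0 < x) :
    Lam (α + 1) j x = (x : ℂ)⁻¹ * iteratedDeriv j
      (fun y => -(y + 1) * gammaRatio ⌊α.re⌋ y * exp (-(y + 1) * Real.log x)) α := by
  have hfloor : ⌊(α + 1).re⌋ = ⌊α.re⌋ + 1 := by simp
  simp_rw [Lam_eq_iteratedDeriv, hfloor, iteratedDeriv_mul_cexp_add_const, gammaRatio_add_one,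
    neg_one_mul, exp_neg, exp_ofReal_log hx]

lemma Lam_sub_one (hx : 0 < x) (k : ℕ) :
    Lam (α - 1) k x = x * iteratedDeriv k
      (fun y => gammaRatio (⌊α.re⌋ - 1) (y - 1) * exp (-(y + 1) * Real.log x)) α := by
  have hfloor : ⌊(α - 1).re⌋ = ⌊α.re⌋ - 1 := by simp
  simp_rw [Lam_eq_iteratedDeriv, hfloor, sub_eq_add_neg, iteratedDeriv_mul_cexp_add_const,
    neg_neg, one_mul, exp_ofReal_log hx]

lemma hasDerivAt_Lam (hx : 0 < x) : HasDerivAt (Lam α j) (Lam (α + 1) j x) x := by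
  have hG := hasDerivAt_iteratedDeriv_mul_cexp (g := fun y => -(y + 1))
    (analyticAt_gammaRatio (Int.lt_floor_add_one α.re)) (by fun_prop) j (Real.log x)
  rw [Lam_add_one α j hx]
  exact (hG.comp_ofReal.scomp x (Real.hasDerivAt_log hx.ne')).congr_deriv (by simp [real_smul])

lemma neg_mul_Lam (hx : 0 < x) :
    -(x : ℂ) * Lam α j x = α * Lam (α - 1) j x + j * Lam (α - 1) (j - 1) x := by
  set q : ℂ → ℂ := fun y => gammaRatio (⌊α.re⌋ - 1) (y - 1) * exp (-(y + 1) * Real.log x)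
  have hq : AnalyticAt ℂ q α := by
    refine AnalyticAt.mul ?_ (by fun_prop)
    exact (analyticAt_gammaRatio (by simp)).comp (by fun_prop)
  have hyq : (fun y => y * q y) =
      fun y => -(gammaRatio ⌊α.re⌋ y * exp (-(y + 1) * Real.log x)) := by
    funext y
    rw [← mul_assoc, mul_gammaRatio_sub_one, neg_mul]
  rw [Lam_sub_one α hx, Lam_sub_one α hx, Lam_eq_iteratedDeriv]
  calc _ = x * iteratedDeriv j (fun y => y * q y) α := by rw [hyq, iteratedDeriv_fun_neg]; ring
    _ = _ := by rw [iteratedDeriv_id_mul hq.contDiffAt]; ring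

end Lam

theorem rational_inverse_laplace_intertwines_general
    (α : ℂ) (j : ℕ) :
    (∀ x : ℝ, 0 < x → deriv (fun u : ℝ => Lam α j u) x = Lam (α + 1) j x) ∧
    (∀ x : ℝ, 0 < x →
      -(x : ℂ) * Lam α j x = α * Lam (α - 1) j x + (j : ℂ) * Lam (α - 1) (j - 1) x) :=
  ⟨fun _ hx => (hasDerivAt_Lam α j hx).deriv, fun _ hx => neg_mul_Lam α j hx⟩

/-- The rational inverse Laplace transform intertwines multiplication by `z` with `d/dx`, and
`d/dz` with multiplication by `-x`, on the monomials `z^α (log z)^j` with `Re α ∉ ℤ`: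
`(d/dx) Λ_{α,j}(x) = Λ_{α+1,j}(x)` and `-x Λ_{α,j}(x) = α Λ_{α-1,j}(x) + j Λ_{α-1,j-1}(x)`. -/
theorem rational_inverse_laplace_intertwines
    (α : ℂ) (hα : ∀ m : ℤ, α.re ≠ (m : ℝ)) (j : ℕ) :
    (∀ x : ℝ, 0 < x → deriv (fun u : ℝ => Lam α j u) x = Lam (α + 1) j x) ∧
    (∀ x : ℝ, 0 < x →
      -(x : ℂ) * Lam α j x = α * Lam (α - 1) j x + (j : ℂ) * Lam (α - 1) (j - 1) x) :=
  rational_inverse_laplace_intertwines_general α j
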